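/- arXiv:2601.01445 — 4 statements merged into one kernel-verified Lean document; each statement's English description precedes it below -/
import Mathlib

section
/- The pair (E, p) is logically contextual if and only if there exists a set e ∈ E with p e > 0 such that for every λ ∈ e there exists a set f ∈ E with λ ∈ f and p f = 0. -/
/-- The probability that a distribution `q` on the finite set `Λ` of deterministic states
assigns to a subset `S ⊆ Λ`: `q(S) = ∑_{l ∈ S} q l`. -/
noncomputable def setSum {Λ : Type*} [Fintype Λ] (q : Λ → ℝ) (S : Set Λ) : ℝ :=
  ∑ l, S.indicator q l

/-- `(E, p)` is logically contextual if there is no probability distribution `q` on `Λ`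
such that for every `e ∈ E`, `q(e) > 0` iff `p e > 0`. -/
def IsLogicallyContextual {Λ : Type*} [Fintype Λ] (E : Set (Set Λ)) (p : Set Λ → ℝ) : Prop :=
  ¬ ∃ q : Λ → ℝ, (∀ l, 0 ≤ q l) ∧ (∑ l, q l) = 1 ∧
      ∀ e ∈ E, (0 < setSum q e ↔ 0 < p e)

/-- `(E, p)` witnesses a logical Hardy-type paradox if there exist finitely many sets
`e₁, …, eₙ ∈ E` (`n ≥ 1`) with `e₁ ∩ ⋯ ∩ eₙ = ∅` and an index `k` such that
`p eₖ > 0` and `p eᵢ = 1` for all `i ≠ k`. -/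
def WitnessesLogicalHardy {Λ : Type*} (E : Set (Set Λ)) (p : Set Λ → ℝ) : Prop :=
  ∃ n : ℕ, 1 ≤ n ∧ ∃ e : Fin n → Set Λ,
    (∀ i, e i ∈ E) ∧ (⋂ i, e i) = ∅ ∧
    ∃ k : Fin n, 0 < p (e k) ∧ ∀ i ≠ k, p (e i) = 1

/-- `(E, p)` is strongly contextual if for every deterministic state `l ∈ Λ` there exists
`e ∈ E` with `l ∈ e` and `p e = 0`. -/
def IsStronglyContextual {Λ : Type*} (E : Set (Set Λ)) (p : Set Λ → ℝ) : Prop :=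
  ∀ l : Λ, ∃ e ∈ E, l ∈ e ∧ p e = 0


/- Call a state consistent if it lies in no event of probability zero. If some event of
positive probability contains only inconsistent states, a distribution reproducing the
support of `p` would have to put weight on one of them, hence on an impossible event.
Otherwise the uniform distribution on the consistent states reproduces the support, and
closure of `E` under complements guarantees that consistent states exist. -/

section

variable {Λ : Type*}

def consistentStates (E : Set (Set Λ)) (p : Set Λ → ℝ) : Set Λ :=
  {l | ∀ f ∈ E, l ∈ f → p f ≠ 0}

lemma consistentStates_nonempty {E : Set (Set Λ)} (hE : E.Nonempty) (hcompl : ∀ e ∈ E, eᶜ ∈ E)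
    {p : Set Λ → ℝ} (hpc : ∀ e ∈ E, p eᶜ = 1 - p e)
    (hmeet : ∀ e ∈ E, 0 < p e → ∃ l ∈ e, l ∈ consistentStates E p) :
    (consistentStates E p).Nonempty := by
  obtain ⟨e, he⟩ := hE
  by_cases hpe : 0 < p e
  · obtain ⟨l, -, hl⟩ := hmeet e he hpe
    exact ⟨l, hl⟩
  · obtain ⟨l, -, hl⟩ := hmeet eᶜ (hcompl e he) (by rw [hpc e he]; linarith)
    exact ⟨l, hl⟩

variable [Fintype Λ]

lemma setSum_pos_iff {q : Λ → ℝ} (hq : ∀ l, 0 ≤ q l) (S : Set Λ) :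
    0 < setSum q S ↔ ∃ l ∈ S, 0 < q l := by
  rw [setSum, Finset.sum_pos_iff_of_nonneg fun l _ => Set.indicator_nonneg (fun l _ => hq l) l]
  refine ⟨fun ⟨l, _, hl⟩ => ?_, fun ⟨l, hlS, hl⟩ => ⟨l, Finset.mem_univ l, by simpa [hlS]⟩⟩
  by_cases hlS : l ∈ S
  · exact ⟨l, hlS, by simpa [hlS] using hl⟩
  · simp [hlS] at hl

lemma exists_distribution_setSum_pos_iff {G : Set Λ} (hG : G.Nonempty) :
    ∃ q : Λ → ℝ, (∀ l, 0 ≤ q l) ∧ ∑ l, q l = 1 ∧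
      ∀ S : Set Λ, 0 < setSum q S ↔ (S ∩ G).Nonempty := by
  classical
  have hcard : (0 : ℝ) < G.ncard := by exact_mod_cast (Set.ncard_pos G.toFinite).2 hG
  have hq0 : ∀ l, 0 ≤ G.indicator (fun _ => (G.ncard : ℝ)⁻¹) l :=
    Set.indicator_nonneg fun _ _ => by positivity
  refine ⟨G.indicator fun _ => (G.ncard : ℝ)⁻¹, hq0, ?_, fun S => ?_⟩
  · have hsum : ∑ l, G.indicator (fun _ => (G.ncard : ℝ)⁻¹) l = G.ncard * (G.ncard : ℝ)⁻¹ := by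
      rw [Finset.sum_indicator_eq_sum_filter, Finset.sum_const, nsmul_eq_mul,
        Set.ncard_eq_toFinset_card']
      simp
    rw [hsum, mul_inv_cancel₀ hcard.ne']
  · rw [setSum_pos_iff hq0]
    refine exists_congr fun l => ⟨fun ⟨hlS, hl⟩ => ⟨hlS, ?_⟩, fun ⟨hlS, hlG⟩ => ⟨hlS, ?_⟩⟩
    · by_contra hlG
      simp [hlG] at hl
    · simpa [hlG] using hcard

lemma not_isLogicallyContextual_of_meets_consistentStates {E : Set (Set Λ)} {p : Set Λ → ℝ}
    (hp0 : ∀ e ∈ E, 0 ≤ p e) (hne : (consistentStates E p).Nonempty)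
    (hmeet : ∀ e ∈ E, 0 < p e → ∃ l ∈ e, l ∈ consistentStates E p) :
    ¬ IsLogicallyContextual E p := by
  obtain ⟨q, hq0, hq1, hsupp⟩ := exists_distribution_setSum_pos_iff hne
  refine not_not_intro ⟨q, hq0, hq1, fun e he => (hsupp e).trans ⟨?_, hmeet e he⟩⟩
  rintro ⟨l, hle, hl⟩
  exact (hp0 e he).lt_of_ne (hl e he hle).symm

lemma isLogicallyContextual_of_forall_mem_exists_eq_zero {E : Set (Set Λ)} {p : Set Λ → ℝ}
    {e : Set Λ} (he : e ∈ E) (hpe : 0 < p e) (hcov : ∀ l ∈ e, ∃ f ∈ E, l ∈ f ∧ p f = 0) :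
    IsLogicallyContextual E p := by
  rintro ⟨q, hq0, -, hsupp⟩
  obtain ⟨l, hle, hql⟩ := (setSum_pos_iff hq0 e).1 ((hsupp e he).2 hpe)
  obtain ⟨f, hf, hlf, hpf⟩ := hcov l hle
  have hpos : 0 < p f := (hsupp f hf).1 ((setSum_pos_iff hq0 f).2 ⟨l, hlf, hql⟩)
  exact hpos.ne' hpf

end

theorem logicallyContextual_iff_general {Λ : Type*} [Fintype Λ]
    (E : Set (Set Λ)) (hE : E.Nonempty) (hcompl : ∀ e ∈ E, eᶜ ∈ E)
    (p : Set Λ → ℝ) (hp0 : ∀ e ∈ E, 0 ≤ p e)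
    (hpc : ∀ e ∈ E, p eᶜ = 1 - p e) :
    IsLogicallyContextual E p ↔
      ∃ e ∈ E, 0 < p e ∧ ∀ l ∈ e, ∃ f ∈ E, l ∈ f ∧ p f = 0 := by
  refine ⟨fun hctx => ?_, fun ⟨e, he, hpe, hcov⟩ =>
    isLogicallyContextual_of_forall_mem_exists_eq_zero he hpe hcov⟩
  by_contra! hmeet
  exact not_isLogicallyContextual_of_meets_consistentStates hp0
    (consistentStates_nonempty hE hcompl hpc hmeet) hmeet hctx

/-- A general system `(E, p)` is logically contextual iff there exists an event
`e ∈ E` with `p e > 0` such that every deterministic state `l ∈ e` lies in some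
event `f ∈ E` with `p f = 0`. -/
theorem logicallyContextual_iff {Λ : Type*} [Fintype Λ] [Nonempty Λ]
    (E : Set (Set Λ)) (hE : E.Nonempty) (hcompl : ∀ e ∈ E, eᶜ ∈ E)
    (p : Set Λ → ℝ) (hp0 : ∀ e ∈ E, 0 ≤ p e) (hp1 : ∀ e ∈ E, p e ≤ 1)
    (hpc : ∀ e ∈ E, p eᶜ = 1 - p e) :
    IsLogicallyContextual E p ↔
      ∃ e ∈ E, 0 < p e ∧ ∀ l ∈ e, ∃ f ∈ E, l ∈ f ∧ p f = 0 :=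
  logicallyContextual_iff_general E hE hcompl p hp0 hpc
end

section
/- The pair (E, p) is strongly contextual if and only if (E, p) witnesses a logical Hardy-type paradox with success probability 1, i.e., there exist finitely many sets e₁, …, eₙ ∈ E (n ≥ 1) with e₁ ∩ ⋯ ∩ eₙ = ∅ and p eᵢ = 1 for all i. -/
/- Complementation turns "`l` lies in an event of probability `0`" into "`l` avoids an event of
probability `1`", so strong contextuality says that the events of probability `1` have no common
deterministic state; as `Λ` is finite, one such event per state already has empty intersection. -/

theorem forall_exists_notMem_iff_exists_fin_iInter_eq_empty {Λ : Type*} [Fintype Λ]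
    [Nonempty Λ] (F : Set (Set Λ)) :
    (∀ l : Λ, ∃ e ∈ F, l ∉ e) ↔
      ∃ n : ℕ, 1 ≤ n ∧ ∃ e : Fin n → Set Λ, (∀ i, e i ∈ F) ∧ (⋂ i, e i) = ∅ := by
  constructor
  · intro h
    choose f hfF hlf using h
    let σ := Fintype.equivFin Λ
    refine ⟨Fintype.card Λ, Fintype.card_pos, fun i => f (σ.symm i), fun i => hfF _, ?_⟩
    refine Set.eq_empty_of_forall_notMem fun l hl => hlf l ?_
    simpa using Set.mem_iInter.mp hl (σ l)
  · rintro ⟨n, -, e, heF, hempty⟩ l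
    obtain ⟨i, hi⟩ : ∃ i, l ∉ e i :=
      not_forall.mp (Set.mem_iInter.not.mp (hempty ▸ Set.notMem_empty l))
    exact ⟨e i, heF i, hi⟩

theorem isStronglyContextual_iff_forall_exists_notMem {Λ : Type*} {E : Set (Set Λ)}
    {p : Set Λ → ℝ} (hcompl : ∀ e ∈ E, eᶜ ∈ E) (hpc : ∀ e ∈ E, p eᶜ = 1 - p e) :
    IsStronglyContextual E p ↔ ∀ l : Λ, ∃ e ∈ {e ∈ E | p e = 1}, l ∉ e := by
  refine forall_congr' fun l => ⟨?_, ?_⟩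
  · rintro ⟨e, he, hl, hp⟩
    exact ⟨eᶜ, ⟨hcompl e he, by rw [hpc e he, hp]; ring⟩, not_not.mpr hl⟩
  · rintro ⟨e, ⟨he, hp⟩, hl⟩
    exact ⟨eᶜ, hcompl e he, hl, by rw [hpc e he, hp]; ring⟩

theorem stronglyContextual_iff_hardy_sp_one_general {Λ : Type*} [Fintype Λ] [Nonempty Λ]
    (E : Set (Set Λ)) (hcompl : ∀ e ∈ E, eᶜ ∈ E)
    (p : Set Λ → ℝ)
    (hpc : ∀ e ∈ E, p eᶜ = 1 - p e) :
    IsStronglyContextual E p ↔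
      ∃ n : ℕ, 1 ≤ n ∧ ∃ e : Fin n → Set Λ,
        (∀ i, e i ∈ E) ∧ (⋂ i, e i) = ∅ ∧ ∀ i, p (e i) = 1 := by
  rw [isStronglyContextual_iff_forall_exists_notMem hcompl hpc,
    forall_exists_notMem_iff_exists_fin_iInter_eq_empty]
  simp only [Set.mem_ofPred_eq, forall_and, and_comm, and_left_comm]

/-- A general system `(E, p)` is strongly contextual iff it witnesses a logical
Hardy-type paradox with success probability `1`: there exist finitely many sets
`e₁, …, eₙ ∈ E` (`n ≥ 1`) with `e₁ ∩ ⋯ ∩ eₙ = ∅` and `p eᵢ = 1` for all `i`. -/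
theorem stronglyContextual_iff_hardy_sp_one {Λ : Type*} [Fintype Λ] [Nonempty Λ]
    (E : Set (Set Λ)) (hE : E.Nonempty) (hcompl : ∀ e ∈ E, eᶜ ∈ E)
    (p : Set Λ → ℝ) (hp0 : ∀ e ∈ E, 0 ≤ p e) (hp1 : ∀ e ∈ E, p e ≤ 1)
    (hpc : ∀ e ∈ E, p eᶜ = 1 - p e) :
    IsStronglyContextual E p ↔
      ∃ n : ℕ, 1 ≤ n ∧ ∃ e : Fin n → Set Λ,
        (∀ i, e i ∈ E) ∧ (⋂ i, e i) = ∅ ∧ ∀ i, p (e i) = 1 :=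
  stronglyContextual_iff_hardy_sp_one_general E hcompl p hpc
end

section
/- If the pair (E, p) witnesses a logical Hardy-type paradox, then there is no probability distribution q on Λ such that q(e) = p e for every e ∈ E; that is, the state p admits no classical (noncontextual) probabilistic model. -/
section setSum

variable {Λ : Type*} [Fintype Λ] {q : Λ → ℝ}

theorem setSum_add_setSum_compl (S : Set Λ) : setSum q S + setSum q Sᶜ = ∑ l, q l := by
  simp only [setSum, ← Finset.sum_add_distrib, Set.indicator_self_add_compl_apply]

theorem exists_mem_pos_of_setSum_pos {S : Set Λ} (h : 0 < setSum q S) : ∃ l ∈ S, 0 < q l := by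
  obtain ⟨l, -, hl⟩ := Finset.exists_lt_of_sum_lt
    (show ∑ _ : Λ, (0 : ℝ) < ∑ l, S.indicator q l by simpa [setSum] using h)
  by_cases hlS : l ∈ S
  · exact ⟨l, hlS, by rwa [Set.indicator_of_mem hlS] at hl⟩
  · simp [Set.indicator_of_notMem hlS] at hl

theorem mem_of_setSum_eq_one (hq0 : ∀ l, 0 ≤ q l) (hq1 : ∑ l, q l = 1) {S : Set Λ}
    (hS : setSum q S = 1) {l : Λ} (hl : 0 < q l) : l ∈ S := by
  have hcompl : setSum q Sᶜ = 0 := by linarith [setSum_add_setSum_compl (q := q) S]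
  have hzero := (Finset.sum_eq_zero_iff_of_nonneg fun x _ =>
    Set.indicator_nonneg (fun y _ => hq0 y) x).mp hcompl l (Finset.mem_univ l)
  by_contra hlS
  rw [Set.indicator_of_mem (Set.mem_compl hlS)] at hzero
  exact hl.ne' hzero

/-- An atom of positive weight in `e k` lies in every `e i` of probability one. -/
theorem iInter_nonempty_of_setSum {ι : Type*} (hq0 : ∀ l, 0 ≤ q l) (hq1 : ∑ l, q l = 1)
    (e : ι → Set Λ) (k : ι) (hk : 0 < setSum q (e k)) (hone : ∀ i ≠ k, setSum q (e i) = 1) :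
    (⋂ i, e i).Nonempty := by
  obtain ⟨l, hlk, hl⟩ := exists_mem_pos_of_setSum_pos hk
  refine ⟨l, Set.mem_iInter.mpr fun i => ?_⟩
  by_cases hik : i = k
  · exact hik ▸ hlk
  · exact mem_of_setSum_eq_one hq0 hq1 (hone i hik) hl

end setSum

theorem witnessesLogicalHardy_no_classical_model_general {Λ : Type*} [Fintype Λ]
    (E : Set (Set Λ))
    (p : Set Λ → ℝ)
    (hH : WitnessesLogicalHardy E p) :
    ¬ ∃ q : Λ → ℝ, (∀ l, 0 ≤ q l) ∧ (∑ l, q l) = 1 ∧ ∀ e ∈ E, setSum q e = p e := by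
  rintro ⟨q, hq0, hq1, hqE⟩
  obtain ⟨_, _, e, heE, hempty, k, hk, hone⟩ := hH
  have hmodel : ∀ i, setSum q (e i) = p (e i) := fun i => hqE _ (heE i)
  refine (iInter_nonempty_of_setSum hq0 hq1 e k ?_ fun i hik => ?_).ne_empty hempty
  · rwa [hmodel]
  · rw [hmodel, hone i hik]

/-- If `(E, p)` witnesses a logical Hardy-type paradox, then the state `p` admits no
classical (noncontextual) probabilistic model: there is no probability distribution
`q` on `Λ` with `q(e) = p e` for every `e ∈ E`. -/
theorem witnessesLogicalHardy_no_classical_model {Λ : Type*} [Fintype Λ] [Nonempty Λ]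
    (E : Set (Set Λ)) (hE : E.Nonempty) (hcompl : ∀ e ∈ E, eᶜ ∈ E)
    (p : Set Λ → ℝ) (hp0 : ∀ e ∈ E, 0 ≤ p e) (hp1 : ∀ e ∈ E, p e ≤ 1)
    (hpc : ∀ e ∈ E, p eᶜ = 1 - p e)
    (hH : WitnessesLogicalHardy E p) :
    ¬ ∃ q : Λ → ℝ, (∀ l, 0 ≤ q l) ∧ (∑ l, q l) = 1 ∧ ∀ e ∈ E, setSum q e = p e :=
  witnessesLogicalHardy_no_classical_model_general E p hH
end

section
/- There exists a probability distribution q on Λ such that for every v ∈ V one has (∃ λ ∈ m v with q λ > 0) if and only if b v, precisely when there exists a nonempty subset S ⊆ Λ such that for every v ∈ V one has S ∩ m v ≠ ∅ if and only if b v. (This is the content of the incidence-matrix criterion: the Boolean linear system M x = b̄ over the two-element Boolean algebra has a solution x if and only if the possibilistic collapse b extends to a global probabilistic model; hence the system is logically contextual if and only if the Boolean system has no solution.) -/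
/-! Only the support of a distribution matters: the set where `q` is positive is a Boolean
solution, and conversely the uniform distribution on a Boolean solution `S` has support `S`. -/

open Finset

theorem nonempty_setOf_pos_of_sum_eq_one {Λ : Type*} [Fintype Λ] {q : Λ → ℝ}
    (hq0 : ∀ l, 0 ≤ q l) (hq1 : ∑ l, q l = 1) : {l | 0 < q l}.Nonempty := by
  obtain ⟨l, -, hl⟩ := exists_ne_zero_of_sum_ne_zero (hq1.trans_ne one_ne_zero)
  exact ⟨l, (hq0 l).lt_of_ne' hl⟩

theorem exists_prob_setOf_pos_eq {Λ : Type*} [Fintype Λ] {S : Set Λ} (hS : S.Nonempty) :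
    ∃ q : Λ → ℝ, (∀ l, 0 ≤ q l) ∧ ∑ l, q l = 1 ∧ {l | 0 < q l} = S := by
  classical
  have hcard : (0 : ℝ) < #S.toFinset := by
    exact_mod_cast card_pos.mpr (Set.toFinset_nonempty.mpr hS)
  refine ⟨S.indicator fun _ => (#S.toFinset : ℝ)⁻¹, fun l => ?_, ?_, ?_⟩
  · exact Set.indicator_nonneg (fun _ _ => by positivity) l
  · rw [sum_indicator_eq_sum_filter, Set.filter_mem_univ_eq_toFinset, sum_const, nsmul_eq_mul,
      mul_inv_cancel₀ hcard.ne']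
  · ext l
    by_cases hl : l ∈ S
    · simpa [Set.indicator_of_mem hl, hl] using hcard
    · simp [hl]

theorem prob_model_iff_boolean_solution_general {Λ V : Type*} [Fintype Λ]
    (m : V → Set Λ) (b : V → Prop) :
    (∃ q : Λ → ℝ, (∀ l, 0 ≤ q l) ∧ (∑ l, q l) = 1 ∧
        ∀ v, (∃ l ∈ m v, 0 < q l) ↔ b v) ↔
    (∃ S : Set Λ, S.Nonempty ∧ ∀ v, (S ∩ m v).Nonempty ↔ b v) := by
  constructor
  · rintro ⟨q, hq0, hq1, hq⟩
    exact ⟨{l | 0 < q l}, nonempty_setOf_pos_of_sum_eq_one hq0 hq1,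
      fun v => Set.inter_nonempty_iff_exists_right.trans (hq v)⟩
  · rintro ⟨S, hSne, hS⟩
    obtain ⟨q, hq0, hq1, rfl⟩ := exists_prob_setOf_pos_eq hSne
    exact ⟨q, hq0, hq1, fun v => Set.inter_nonempty_iff_exists_right.symm.trans (hS v)⟩

/-- The incidence-matrix criterion: the possibilistic collapse `b` extends to a global
probabilistic model (a probability distribution `q` on the deterministic states `Λ`
with `q(m v) > 0` iff `b v` for every atom `v`) precisely when the Boolean linear
system `M x = b̄` over the two-element Boolean algebra has a solution, i.e. there is a
nonempty subset `S ⊆ Λ` with `S ∩ m v ≠ ∅` iff `b v` for every atom `v`. -/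
theorem prob_model_iff_boolean_solution {Λ V : Type*} [Fintype Λ] [Fintype V]
    (m : V → Set Λ) (b : V → Prop) :
    (∃ q : Λ → ℝ, (∀ l, 0 ≤ q l) ∧ (∑ l, q l) = 1 ∧
        ∀ v, (∃ l ∈ m v, 0 < q l) ↔ b v) ↔
    (∃ S : Set Λ, S.Nonempty ∧ ∀ v, (S ∩ m v).Nonempty ↔ b v) :=
  prob_model_iff_boolean_solution_general m b
end
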